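/- Let $T : \mathbb{F}^n \to \mathbb{F}^n$ be a linear map ($\mathbb{F} = \mathbb{R}$ or $\mathbb{C}$) and let $1 \leq p, r < \infty$ with $p \neq r$ and $n \geq 2$. Then $T$ is not an isometry from $\ell^r_n$ to $\ell^p_n$; that is, there exists $x \in \mathbb{F}^n$ with $\|T x\|_p \neq \|x\|_r$. -/

import Mathlib

/-!
If `T` were an isometry `ℓ^r_n → ℓ^p_n` it would be bijective, so the images of two unit vectors
would span an isometric copy of the real plane `ℓ^r_2` in `ℓ^p_n`, and preimages of two unit
vectors a copy of `ℓ^p_2` in `ℓ^r_n`. For a copy of `ℓ^b_2` in `ℓ^a` spanned by `u, v`: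
* if `a ≥ 2`, Clarkson's inequality `2 (‖x‖^a + ‖y‖^a) ≤ ‖x + y‖^a + ‖x - y‖^a` at `x = u, y = v`
  gives `2 ≤ 2^(a/b)`, so `b ≤ a`;
* if `b < a`, then `b ≥ 2`: since `‖·‖^a` is smooth away from `0`, the second difference
  `‖u + τ v‖^a + ‖u - τ v‖^a - 2` is `O(τ²) + O(τ^a)`, while in `ℓ^b_2` it is at least `2 τ^b`.
If `p < r`, the second point for `ℓ^p_2 ⊆ ℓ^r` gives `p ≥ 2`, and then the first for
`ℓ^r_2 ⊆ ℓ^p` gives `r ≤ p`; symmetrically if `r < p`.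
-/

open Finset Real Filter Topology

lemma rpow_eq_sq_rpow {x : ℝ} (hx : 0 ≤ x) (a : ℝ) : x ^ a = (x ^ 2) ^ (a / 2) := by
  rw [← Real.rpow_natCast, ← Real.rpow_mul hx]
  ring_nf

lemma one_add_rpow_le_exp {s t : ℝ} (hs : 0 ≤ s) (ht : -1 ≤ t) : (1 + t) ^ s ≤ exp (s * t) := by
  calc (1 + t) ^ s ≤ exp t ^ s := by
        gcongr
        · linarith
        · linarith [add_one_le_exp t]
    _ = exp (s * t) := by rw [← Real.exp_mul, mul_comm]

lemma exp_add_add_exp_sub_le (A x : ℝ) : exp (A + x) + exp (A - x) ≤ 2 * exp (A + x ^ 2 / 2) := by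
  calc exp (A + x) + exp (A - x) = 2 * exp A * cosh x := by
        rw [cosh_eq, exp_add, sub_eq_add_neg, exp_add]; ring
    _ ≤ 2 * exp A * exp (x ^ 2 / 2) := by gcongr; exact cosh_le_exp_half_sq x
    _ = 2 * exp (A + x ^ 2 / 2) := by rw [exp_add]; ring

lemma exists_pos_exp_sub_one_add_rpow_lt_rpow {K a b : ℝ} (hb2 : b < 2)
    (hba : b < a) : ∃ τ > 0, exp (K * τ ^ 2) - 1 + τ ^ a < τ ^ b := by
  set f : ℝ → ℝ := fun τ => K * τ ^ (2 - b) * exp (K * τ ^ 2) + τ ^ (a - b)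
  have hf : ContinuousAt f 0 := by
    have h1 := continuousAt_rpow_const 0 (2 - b) (Or.inr (by linarith))
    have h2 := continuousAt_rpow_const 0 (a - b) (Or.inr (by linarith))
    fun_prop
  have hf0 : f 0 = 0 := by
    simp [f, zero_rpow (by linarith : 2 - b ≠ 0), zero_rpow (by linarith : a - b ≠ 0)]
  have hf1 : f 0 < 1 := by rw [hf0]; exact one_pos
  obtain ⟨τ, hfτ, hτ⟩ : ∃ τ, f τ < 1 ∧ 0 < τ :=
    ((hf.eventually (gt_mem_nhds hf1)).filter_mono nhdsWithin_le_nhds |>.and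
      (self_mem_nhdsWithin : ∀ᶠ τ in 𝓝[>] (0 : ℝ), 0 < τ)).exists
  refine ⟨τ, hτ, ?_⟩
  have hexp : exp (K * τ ^ 2) - 1 ≤ K * τ ^ 2 * exp (K * τ ^ 2) := by
    have h := mul_le_mul_of_nonneg_left (one_sub_le_exp_neg (K * τ ^ 2)) (exp_pos (K * τ ^ 2)).le
    rw [← exp_add, add_neg_cancel, exp_zero] at h
    linarith
  have hsplit : K * τ ^ 2 * exp (K * τ ^ 2) + τ ^ a = τ ^ b * f τ := by
    have h2 : τ ^ b * τ ^ (2 - b) = τ ^ 2 := by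
      rw [← rpow_add hτ, add_sub_cancel, rpow_two]
    have ha : τ ^ b * τ ^ (a - b) = τ ^ a := by rw [← rpow_add hτ, add_sub_cancel]
    simp only [f]
    linear_combination (-K * exp (K * τ ^ 2)) * h2 - ha
  calc exp (K * τ ^ 2) - 1 + τ ^ a ≤ τ ^ b * f τ := by linarith
    _ < τ ^ b := mul_lt_of_lt_one_right (rpow_pos_of_pos hτ b) hfτ

section Pointwise

variable {E : Type*} [NormedAddCommGroup E] [InnerProductSpace ℝ E]

theorem two_mul_add_rpow_le_norm_add_rpow_add_norm_sub_rpow {a : ℝ} (ha : 2 ≤ a) (x y : E) :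
    2 * (‖x‖ ^ a + ‖y‖ ^ a) ≤ ‖x + y‖ ^ a + ‖x - y‖ ^ a := by
  have hs : 1 ≤ a / 2 := by linarith
  have hpar : ‖x‖ ^ 2 + ‖y‖ ^ 2 = 1 / 2 * ‖x + y‖ ^ 2 + 1 / 2 * ‖x - y‖ ^ 2 := by
    have := parallelogram_law_with_norm ℝ x y
    simp only [sq]
    linarith
  simp only [rpow_eq_sq_rpow (norm_nonneg _) a]
  calc 2 * ((‖x‖ ^ 2) ^ (a / 2) + (‖y‖ ^ 2) ^ (a / 2))
      ≤ 2 * (‖x‖ ^ 2 + ‖y‖ ^ 2) ^ (a / 2) := by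
        gcongr
        exact Real.add_rpow_le_rpow_add (by positivity) (by positivity) hs
    _ ≤ 2 * (1 / 2 * (‖x + y‖ ^ 2) ^ (a / 2) + 1 / 2 * (‖x - y‖ ^ 2) ^ (a / 2)) := by
        rw [hpar]
        gcongr
        exact (convexOn_rpow hs).2 (sq_nonneg ‖x + y‖) (sq_nonneg ‖x - y‖) (by norm_num)
          (by norm_num) (by norm_num)
    _ = (‖x + y‖ ^ 2) ^ (a / 2) + (‖x - y‖ ^ 2) ^ (a / 2) := by ring

lemma norm_add_smul_rpow_le {z : E} (hz : z ≠ 0) (w : E) {a : ℝ} (ha : 0 ≤ a) (c : ℝ) :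
    ‖z + c • w‖ ^ a ≤
      ‖z‖ ^ a * exp (a / 2 * ((2 * c * inner ℝ z w + c ^ 2 * ‖w‖ ^ 2) / ‖z‖ ^ 2)) := by
  have hZ : 0 < ‖z‖ ^ 2 := by positivity
  have hsq : ‖z + c • w‖ ^ 2 =
      ‖z‖ ^ 2 * (1 + (2 * c * inner ℝ z w + c ^ 2 * ‖w‖ ^ 2) / ‖z‖ ^ 2) := by
    rw [norm_add_sq_real, inner_smul_right, norm_smul, Real.norm_eq_abs, mul_pow, sq_abs]
    field_simp
    ring
  set t := (2 * c * inner ℝ z w + c ^ 2 * ‖w‖ ^ 2) / ‖z‖ ^ 2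
  have ht : -1 ≤ t := by
    have : 0 ≤ ‖z‖ ^ 2 * (1 + t) := hsq ▸ sq_nonneg _
    linarith [(mul_nonneg_iff_of_pos_left hZ).1 this]
  rw [rpow_eq_sq_rpow (norm_nonneg _), hsq, mul_rpow hZ.le (by linarith),
    ← rpow_eq_sq_rpow (norm_nonneg _)]
  gcongr
  exact one_add_rpow_le_exp (by positivity) ht

theorem exists_norm_add_smul_rpow_add_norm_sub_smul_rpow_le {a : ℝ} (ha : 0 ≤ a) (z w : E) :
    ∃ κ ≥ 0, ∀ τ : ℝ, ‖z + τ • w‖ ^ a + ‖z - τ • w‖ ^ a ≤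
      2 * ‖z‖ ^ a * exp (κ * τ ^ 2) + 2 * ‖w‖ ^ a * |τ| ^ a := by
  by_cases hz : z = 0
  · refine ⟨0, le_rfl, fun τ => ?_⟩
    simp only [hz, zero_add, zero_sub, norm_neg, norm_smul, Real.norm_eq_abs,
      mul_rpow (abs_nonneg τ) (norm_nonneg w)]
    have : 0 ≤ 2 * ‖(0 : E)‖ ^ a * exp (0 * τ ^ 2) := by positivity
    linarith
  set Z := ‖z‖ ^ 2
  refine ⟨a / 2 * ‖w‖ ^ 2 / Z + a ^ 2 * inner ℝ z w ^ 2 / (2 * Z ^ 2), by positivity,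
    fun τ => ?_⟩
  have hplus := norm_add_smul_rpow_le hz w ha τ
  have hminus := norm_add_smul_rpow_le hz w ha (-τ)
  rw [neg_smul, ← sub_eq_add_neg] at hminus
  have hexp := exp_add_add_exp_sub_le (a / 2 * (τ ^ 2 * ‖w‖ ^ 2) / Z) (a * τ * inner ℝ z w / Z)
  rw [show a / 2 * ((2 * τ * inner ℝ z w + τ ^ 2 * ‖w‖ ^ 2) / Z)
      = a / 2 * (τ ^ 2 * ‖w‖ ^ 2) / Z + a * τ * inner ℝ z w / Z by ring] at hplus
  rw [show a / 2 * ((2 * -τ * inner ℝ z w + (-τ) ^ 2 * ‖w‖ ^ 2) / Z)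
      = a / 2 * (τ ^ 2 * ‖w‖ ^ 2) / Z - a * τ * inner ℝ z w / Z by ring] at hminus
  rw [show a / 2 * (τ ^ 2 * ‖w‖ ^ 2) / Z + (a * τ * inner ℝ z w / Z) ^ 2 / 2
      = (a / 2 * ‖w‖ ^ 2 / Z + a ^ 2 * inner ℝ z w ^ 2 / (2 * Z ^ 2)) * τ ^ 2 by ring] at hexp
  calc ‖z + τ • w‖ ^ a + ‖z - τ • w‖ ^ a
      ≤ ‖z‖ ^ a * (exp (a / 2 * (τ ^ 2 * ‖w‖ ^ 2) / Z + a * τ * inner ℝ z w / Z)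
          + exp (a / 2 * (τ ^ 2 * ‖w‖ ^ 2) / Z - a * τ * inner ℝ z w / Z)) := by
        rw [mul_add]
        exact add_le_add hplus hminus
    _ ≤ ‖z‖ ^ a * (2 * exp ((a / 2 * ‖w‖ ^ 2 / Z + a ^ 2 * inner ℝ z w ^ 2 / (2 * Z ^ 2)) * τ ^ 2))
        := by gcongr
    _ ≤ _ := by
        rw [← mul_assoc, mul_comm _ (2 : ℝ)]
        exact le_add_of_nonneg_right (by positivity)

end Pointwise

section LpPlane

variable {ι : Type*} [Fintype ι]

/-- `(s, t) ↦ s • u + t • v` is an isometric embedding of the real plane with the `ℓ^b` norm into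
`ℓ^a(ι; E)`, stated with `a`-th powers of both norms. -/
def EmbedsLpPlane {E : Type*} [NormedAddCommGroup E] [NormedSpace ℝ E] (b a : ℝ) (u v : ι → E) :
    Prop :=
  ∀ s t : ℝ, ∑ j, ‖s • u j + t • v j‖ ^ a = (|s| ^ b + |t| ^ b) ^ (a / b)

section NormedSpace

variable {E : Type*} [NormedAddCommGroup E] [NormedSpace ℝ E] {a b : ℝ} {u v : ι → E}

lemma embedsLpPlane_single [DecidableEq ι] (hb : 0 < b) {i i' : ι} (hi : i ≠ i') {e : E}
    (he : ‖e‖ = 1) : EmbedsLpPlane b b (Pi.single i e) (Pi.single i' e) := by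
  intro s t
  rw [div_self hb.ne', rpow_one, Fintype.sum_eq_add i i' hi]
  · simp [hi, hi.symm, norm_smul, he]
  · rintro j ⟨hj, hj'⟩
    simp [hj, hj', hb.ne']

lemma EmbedsLpPlane.of_rpow_eq {κ F : Type*} [Fintype κ] [NormedAddCommGroup F] [NormedSpace ℝ F]
    {u' v' : κ → F} (h : EmbedsLpPlane b b u' v') (ha : 0 < a) (hb : 0 < b)
    (huv : ∀ s t : ℝ, (∑ j, ‖s • u j + t • v j‖ ^ a) ^ (1 / a) =
      (∑ k, ‖s • u' k + t • v' k‖ ^ b) ^ (1 / b)) :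
    EmbedsLpPlane b a u v := by
  intro s t
  calc ∑ j, ‖s • u j + t • v j‖ ^ a = ((∑ j, ‖s • u j + t • v j‖ ^ a) ^ (1 / a)) ^ a := by
        rw [one_div, rpow_inv_rpow (by positivity) ha.ne']
    _ = ((|s| ^ b + |t| ^ b) ^ (1 / b)) ^ a := by rw [huv, h, div_self hb.ne', rpow_one]
    _ = (|s| ^ b + |t| ^ b) ^ (a / b) := by rw [← rpow_mul (by positivity), one_div_mul_eq_div]

lemma EmbedsLpPlane.sum_norm_rpow_left (h : EmbedsLpPlane b a u v) (hb : 0 < b) :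
    ∑ j, ‖u j‖ ^ a = 1 := by
  simpa [hb.ne'] using h 1 0

lemma EmbedsLpPlane.sum_norm_rpow_right (h : EmbedsLpPlane b a u v) (hb : 0 < b) :
    ∑ j, ‖v j‖ ^ a = 1 := by
  simpa [hb.ne'] using h 0 1

end NormedSpace

variable {E : Type*} [NormedAddCommGroup E] [InnerProductSpace ℝ E] {a b : ℝ} {u v : ι → E}

theorem EmbedsLpPlane.le_of_two_le (h : EmbedsLpPlane b a u v) (hb : 0 < b) (ha : 2 ≤ a) :
    b ≤ a := by
  have hsum := sum_le_sum fun j (_ : j ∈ univ) =>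
    two_mul_add_rpow_le_norm_add_rpow_add_norm_sub_rpow ha (u j) (v j)
  rw [← mul_sum, sum_add_distrib, sum_add_distrib, h.sum_norm_rpow_left hb,
    h.sum_norm_rpow_right hb] at hsum
  have hplus := h 1 1
  have hminus := h 1 (-1)
  simp only [one_smul, neg_smul, ← sub_eq_add_neg, abs_one, abs_neg, one_rpow] at hplus hminus
  rw [hplus, hminus] at hsum
  have : (2 : ℝ) ^ (1 : ℝ) ≤ 2 ^ (a / b) := by norm_num at hsum ⊢; linarith
  rwa [rpow_le_rpow_left_iff one_lt_two, one_le_div hb] at this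

theorem EmbedsLpPlane.two_le_of_lt (h : EmbedsLpPlane b a u v) (hb : 0 < b) (hba : b < a) :
    2 ≤ b := by
  by_contra! hb2
  choose κ hκ hbound using fun j =>
    exists_norm_add_smul_rpow_add_norm_sub_smul_rpow_le (by linarith : 0 ≤ a) (u j) (v j)
  obtain ⟨τ, hτ, hlt⟩ := exists_pos_exp_sub_one_add_rpow_lt_rpow (K := ∑ j, κ j) hb2 hba
  set K := ∑ j, κ j
  have hκK : ∀ j, κ j ≤ K := fun j => single_le_sum (fun j _ => hκ j) (mem_univ j)
  have hplus := h 1 τ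
  have hminus := h 1 (-τ)
  simp only [one_smul, neg_smul, ← sub_eq_add_neg, abs_one, abs_neg, one_rpow,
    abs_of_pos hτ] at hplus hminus
  have hlower : 1 + τ ^ b ≤ (1 + τ ^ b) ^ (a / b) :=
    self_le_rpow_of_one_le (by linarith [rpow_nonneg hτ.le b]) ((one_le_div hb).2 hba.le)
  have : 2 * (1 + τ ^ b) ≤ 2 * exp (K * τ ^ 2) + 2 * τ ^ a := calc
    2 * (1 + τ ^ b) ≤ ∑ j, (‖u j + τ • v j‖ ^ a + ‖u j - τ • v j‖ ^ a) := by
      rw [sum_add_distrib, hplus, hminus]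
      linarith
    _ ≤ ∑ j, (2 * ‖u j‖ ^ a * exp (K * τ ^ 2) + 2 * ‖v j‖ ^ a * τ ^ a) := by
      refine sum_le_sum fun j _ => (hbound j τ).trans ?_
      rw [abs_of_pos hτ]
      gcongr
      exact hκK j
    _ = 2 * exp (K * τ ^ 2) + 2 * τ ^ a := by
      rw [sum_add_distrib, ← sum_mul, ← sum_mul, ← mul_sum, ← mul_sum,
        h.sum_norm_rpow_left hb, h.sum_norm_rpow_right hb]
      ring
  linarith

theorem EmbedsLpPlane.eq_of_embedsLpPlane {κ F : Type*} [Fintype κ] [NormedAddCommGroup F]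
    [InnerProductSpace ℝ F] {u' v' : κ → F} (h : EmbedsLpPlane b a u v)
    (h' : EmbedsLpPlane a b u' v') (ha : 0 < a) (hb : 0 < b) : a = b := by
  rcases lt_trichotomy a b with hab | hab | hab
  · exact absurd (h.le_of_two_le hb (h'.two_le_of_lt ha hab)) hab.not_ge
  · exact hab
  · exact absurd (h'.le_of_two_le ha (h.two_le_of_lt hb hab)) hab.not_ge

end LpPlane

lemma sum_norm_rpow_rpow_eq_zero_iff {ι E : Type*} [Fintype ι] [NormedAddCommGroup E] {b : ℝ}
    (hb : 0 < b) {x : ι → E} : (∑ i, ‖x i‖ ^ b) ^ (1 / b) = 0 ↔ x = 0 := by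
  rw [rpow_eq_zero (sum_nonneg fun i _ => by positivity) (by positivity),
    sum_eq_zero_iff_of_nonneg fun i _ => by positivity]
  simp [rpow_eq_zero (norm_nonneg _) hb.ne', funext_iff]

theorem stmt_17 (𝕜 : Type*) [RCLike 𝕜] (n : ℕ) (hn : 2 ≤ n)
    (p r : ℝ) (hp : 1 ≤ p) (hr : 1 ≤ r) (hpr : p ≠ r)
    (T : (Fin n → 𝕜) →ₗ[𝕜] (Fin n → 𝕜)) :
    ∃ x : Fin n → 𝕜, (∑ j, ‖T x j‖ ^ p) ^ (1 / p) ≠ (∑ j, ‖x j‖ ^ r) ^ (1 / r) := by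
  by_contra! hT
  have hp0 : 0 < p := by linarith
  have hr0 : 0 < r := by linarith
  have : Nontrivial (Fin n) := Fin.nontrivial_iff_two_le.2 hn
  obtain ⟨i, i', hii'⟩ := exists_pair_ne (Fin n)
  have hsurj : Function.Surjective T := by
    refine LinearMap.injective_iff_surjective.1 ((injective_iff_map_eq_zero T).2 fun x hx => ?_)
    rw [← sum_norm_rpow_rpow_eq_zero_iff hr0, ← hT, hx]
    simp [hp0.ne']
  let e : Fin n → 𝕜 := Pi.single i 1
  let e' : Fin n → 𝕜 := Pi.single i' 1
  obtain ⟨x, hx⟩ := hsurj e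
  obtain ⟨x', hx'⟩ := hsurj e'
  have hTe : EmbedsLpPlane r p (T e) (T e') :=
    (embedsLpPlane_single hr0 hii' (norm_one (α := 𝕜))).of_rpow_eq hp0 hr0 fun s t => by
      have := hT (s • e + t • e')
      rw [map_add, LinearMap.map_smul_of_tower, LinearMap.map_smul_of_tower] at this
      exact this
  have hxe : EmbedsLpPlane p r x x' :=
    (embedsLpPlane_single hp0 hii' (norm_one (α := 𝕜))).of_rpow_eq hr0 hp0 fun s t => by
      have := hT (s • x + t • x')
      rw [map_add, LinearMap.map_smul_of_tower, LinearMap.map_smul_of_tower, hx, hx'] at this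
      exact this.symm
  exact hpr (hTe.eq_of_embedsLpPlane hxe hp0 hr0)
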